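/- arXiv:1101.4292 — 2 statements merged into one kernel-verified Lean document; each statement's English description precedes it below -/
import Mathlib

section
/- For every d ≥ 3, with α := 1/(2^{d−2} − 1), the simplex Δ(d) := {x ∈ ℝ^d : x_i ≥ 0 for 1 ≤ i ≤ d, and x_1/2 + x_2/4 + ⋯ + x_{d−2}/2^{d−2} + x_{d−1}/(2^{d−1} − 1) + x_d/(2^{d−1} + 1 + α) ≤ 1} is hollow: its interior contains no point of ℤ^d. -/
open MeasureTheory
open scoped ENNReal

/-- The set of integer lattice points of `ℝ^d`. -/
def intPts (d : ℕ) : Set (Fin d → ℝ) := {x | ∀ i, ∃ a : ℤ, x i = a}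

/-- The set of points of `s·ℤ^d` inside `ℝ^d`. -/
def sPts (s d : ℕ) : Set (Fin d → ℝ) := {x | ∀ i, ∃ a : ℤ, x i = (s : ℝ) * a}

/-- A lattice polytope: the convex hull of a nonempty finite set of lattice points. -/
def IsLatticePolytope {d : ℕ} (P : Set (Fin d → ℝ)) : Prop :=
  ∃ V : Set (Fin d → ℝ), V.Finite ∧ V.Nonempty ∧ V ⊆ intPts d ∧ P = convexHull ℝ V

/-- Full-dimensionality: the affine span is everything. -/
def IsFullDim {d : ℕ} (P : Set (Fin d → ℝ)) : Prop :=
  affineSpan ℝ P = ⊤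

/-- A set is hollow if its interior contains no lattice point. -/
def Hollow {d : ℕ} (P : Set (Fin d → ℝ)) : Prop :=
  interior P ∩ intPts d = ∅

/-- A set is `s`-hollow if its interior contains no point of `s·ℤ^d`. -/
def SHollow (s : ℕ) {d : ℕ} (P : Set (Fin d → ℝ)) : Prop :=
  interior P ∩ sPts s d = ∅

/-- Unimodular equivalence: an affine bijection of `ℝ^d` preserving `ℤ^d` maps `P` onto `Q`. -/
def UnimodEquiv {d : ℕ} (P Q : Set (Fin d → ℝ)) : Prop :=
  ∃ T : (Fin d → ℝ) ≃ᵃ[ℝ] (Fin d → ℝ), T '' intPts d = intPts d ∧ T '' P = Q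

/-- Lattice width: infimum over nonzero integer directions `u` of `max ⟨u,·⟩ - min ⟨u,·⟩`
(with value `∞` if there is no direction). -/
noncomputable def latticeWidth {n : ℕ} (K : Set (Fin n → ℝ)) : ℝ≥0∞ :=
  ⨅ u : {u : Fin n → ℤ // u ≠ 0},
    ENNReal.ofReal
      (sSup ((fun x => ∑ i, (u.1 i : ℝ) * x i) '' K) -
       sInf ((fun x => ∑ i, (u.1 i : ℝ) * x i) '' K))

/-- `α = 1/(2^(d-2) - 1)`. -/
noncomputable def alphaConst (d : ℕ) : ℝ := 1 / (2 ^ (d - 2) - 1)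

/-- The coefficient of `x_{i+1}` in the defining inequality of the simplex `Δ(d)`:
`x_1/2 + x_2/4 + ⋯ + x_{d-2}/2^{d-2} + x_{d-1}/(2^{d-1}-1) + x_d/(2^{d-1}+1+α) ≤ 1`. -/
noncomputable def coef (d : ℕ) (i : Fin d) : ℝ :=
  if (i : ℕ) < d - 2 then 1 / 2 ^ ((i : ℕ) + 1)
  else if (i : ℕ) = d - 2 then 1 / (2 ^ (d - 1) - 1)
  else 1 / (2 ^ (d - 1) + 1 + alphaConst d)

/-- The simplex `Δ(d)` of Definition 3.1. -/
noncomputable def DeltaPoly (d : ℕ) : Set (Fin d → ℝ) :=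
  {x | (∀ i, 0 ≤ x i) ∧ ∑ i, coef d i * x i ≤ 1}

/-- The coefficient of `x_{i+1}` in the extra inequality
`x_1/2 + ⋯ + x_{d-3}/2^{d-3} + (2x_{d-2} + x_{d-1} + x_d)/(2^{d-1}+1) ≤ 1`. -/
noncomputable def coef2 (d : ℕ) (i : Fin d) : ℝ :=
  if (i : ℕ) < d - 3 then 1 / 2 ^ ((i : ℕ) + 1)
  else if (i : ℕ) = d - 3 then 2 / (2 ^ (d - 1) + 1)
  else 1 / (2 ^ (d - 1) + 1)

/-! The weights of `Δ(d)` are nonnegative and sum to `1`: the first `d - 2` form a truncated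
geometric series `1 - 2^{-(d-2)}`, and with `t = 2^{d-2}` the last two contribute
`1/(2t - 1) + (t - 1)/(t(2t - 1)) = 1/t`. An interior point of such a simplex has all coordinates
positive, hence `≥ 1` if it is a lattice point, and then its weighted sum is `≥ 1`, contradicting
the strict inequality `< 1` that holds in the interior. -/

open Finset Set

lemma interior_setOf_nonneg_and_weightedSum_le_subset {ι : Type*} [Fintype ι] {c : ι → ℝ}
    (hc : c ≠ 0) :
    interior {x : ι → ℝ | (∀ i, 0 ≤ x i) ∧ ∑ i, c i * x i ≤ 1} ⊆
      {x | (∀ i, 0 < x i) ∧ ∑ i, c i * x i < 1} := by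
  intro x hx
  constructor
  · intro i
    have hi : x ∈ interior (Function.eval i ⁻¹' Ici 0) := interior_mono (fun y hy => hy.1 i) hx
    rwa [← (isOpenMap_eval i).preimage_interior_eq_interior_preimage (continuous_apply i),
      interior_Ici] at hi
  · classical
    let f : (ι → ℝ) →ₗ[ℝ] ℝ := dotProductBilin ℝ ℝ c
    have hf : Function.Surjective f := by
      obtain ⟨j, hj⟩ : ∃ j, c j ≠ 0 := Function.ne_iff.mp hc
      intro r
      refine ⟨Pi.single j (r / c j), ?_⟩
      simpa [f] using mul_div_cancel₀ r hj
    have hx' : x ∈ interior (f ⁻¹' Iic 1) := interior_mono (fun y hy => hy.2) hx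
    rwa [← (f.isOpenMap_of_finiteDimensional hf).preimage_interior_eq_interior_preimage
      f.continuous_of_finiteDimensional, interior_Iic] at hx'

lemma hollow_setOf_nonneg_and_weightedSum_le {d : ℕ} {c : Fin d → ℝ} (hc : ∀ i, 0 ≤ c i)
    (hsum : ∑ i, c i = 1) : Hollow {x : Fin d → ℝ | (∀ i, 0 ≤ x i) ∧ ∑ i, c i * x i ≤ 1} := by
  refine eq_empty_of_forall_notMem fun x ⟨hint, hlat⟩ => ?_
  have hc0 : c ≠ 0 := by
    rintro rfl
    simp at hsum
  obtain ⟨hpos, hlt⟩ := interior_setOf_nonneg_and_weightedSum_le_subset hc0 hint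
  have hone : ∀ i, 1 ≤ x i := by
    intro i
    obtain ⟨a, ha⟩ := hlat i
    have ha_pos : 0 < a := by exact_mod_cast ha ▸ hpos i
    rw [ha]
    exact_mod_cast ha_pos
  have : 1 ≤ ∑ i, c i * x i :=
    calc 1 = ∑ i, c i * 1 := by simp [hsum]
      _ ≤ ∑ i, c i * x i := sum_le_sum fun i _ => mul_le_mul_of_nonneg_left (hone i) (hc i)
  linarith

lemma sum_range_one_div_two_pow_succ (m : ℕ) :
    ∑ k ∈ range m, (1 : ℝ) / 2 ^ (k + 1) = 1 - 1 / 2 ^ m := by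
  induction m with
  | zero => simp
  | succ n ih => rw [sum_range_succ, ih, pow_succ]; ring

lemma one_sub_inv_add_inv_add_inv_eq_one {t : ℝ} (ht : 1 < t) :
    1 - 1 / t + 1 / (2 * t - 1) + 1 / (2 * t + 1 + 1 / (t - 1)) = 1 := by
  have ht0 : t ≠ 0 := by linarith
  have ht1 : t - 1 ≠ 0 := by linarith
  have ht2 : 2 * t - 1 ≠ 0 := by linarith
  rw [show 2 * t + 1 + 1 / (t - 1) = t * (2 * t - 1) / (t - 1) by
    rw [eq_div_iff ht1, add_mul, one_div_mul_cancel ht1]; ring, one_div_div]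
  field_simp
  linear_combination inv_mul_cancel₀ ht2

lemma alphaConst_pos {d : ℕ} (hd : 3 ≤ d) : 0 < alphaConst d := by
  have : (2 : ℝ) ≤ 2 ^ (d - 2) := le_self_pow₀ one_le_two (by omega)
  unfold alphaConst
  exact one_div_pos.mpr (by linarith)

lemma coef_nonneg {d : ℕ} (hd : 3 ≤ d) (i : Fin d) : 0 ≤ coef d i := by
  have : (1 : ℝ) ≤ 2 ^ (d - 1) := one_le_pow₀ one_le_two
  have := alphaConst_pos hd
  unfold coef
  split_ifs <;> positivity

lemma sum_coef {d : ℕ} (hd : 3 ≤ d) : ∑ i, coef d i = 1 := by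
  obtain ⟨m, hm, rfl⟩ : ∃ m, 1 ≤ m ∧ d = m + 2 := ⟨d - 2, by omega, by omega⟩
  have hhead : ∀ i : Fin m, coef (m + 2) i.castSucc.castSucc = 1 / 2 ^ ((i : ℕ) + 1) := fun i => by
    simp [coef]
  rw [Fin.sum_univ_castSucc, Fin.sum_univ_castSucc, sum_congr rfl fun i _ => hhead i,
    Fin.sum_univ_eq_sum_range (fun k => (1 : ℝ) / 2 ^ (k + 1)), sum_range_one_div_two_pow_succ]
  simpa [coef, alphaConst, pow_succ'] using
    one_sub_inv_add_inv_add_inv_eq_one (one_lt_pow₀ one_lt_two (by omega : m ≠ 0))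

/-- For `d ≥ 3` the simplex `Δ(d)` is hollow. -/
theorem DeltaPoly_hollow (d : ℕ) (hd : 3 ≤ d) : Hollow (DeltaPoly d) :=
  hollow_setOf_nonneg_and_weightedSum_le (coef_nonneg hd) (sum_coef hd)
end

section
/- Let d ≥ 4 and α := 1/(2^{d−2} − 1), let Δ(d) := {x ∈ ℝ^d : x_i ≥ 0 for all i, and x_1/2 + x_2/4 + ⋯ + x_{d−2}/2^{d−2} + x_{d−1}/(2^{d−1} − 1) + x_d/(2^{d−1} + 1 + α) ≤ 1}, and let Δ(d)_I := conv(Δ(d) ∩ ℤ^d). Then: (1) Δ(d)_I is a full-dimensional hollow lattice polytope; (2) Δ(d)_I ⊊ Δ(d); and (3) Δ(d)_I is not properly contained in any hollow lattice d-polytope, i.e. every lattice d-polytope Q with Δ(d)_I ⊊ Q contains a point of ℤ^d in its interior. -/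
open MeasureTheory
open scoped ENNReal

/-!
Write `d = e + 2` and `N = 2 ^ (e + 1) = 2 ^ (d - 1)`, and let `c` be the coefficient vector of
`Δ(d)`. The integer hull contains the lattice simplex `S = conv(0, nᵢ eᵢ)` with
`n = (2, 4, …, 2 ^ e, N - 1, N + 1)` (`axisLength`), whose form `∑ xᵢ / nᵢ` (`axisForm`) exceeds
`∑ cᵢ xᵢ` only by `δ x_d` with `δ = 2 / ((N - 1) N (N + 1))` (`coefDefect`). As `∑ cᵢ = 1`, an
interior lattice point of `Δ(d)`, having all coordinates `≥ 1`, cannot exist.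

For maximality, a lattice polytope `Q ⊋ Δ(d)_I` has a lattice vertex `z ∉ Δ(d)`, and a lattice
point `w` is interior to `Q` as soon as `w + t (w - z)` is interior to `S` for some `t > 0`.
If some `z_j < 0`, take `w = 𝟙 - e_j` and `t` small. Otherwise `∑ cᵢ zᵢ > 1`; since every
`(N - 1) N cᵢ` is an even integer, even `∑ cᵢ zᵢ ≥ 1 + 2 / ((N - 1) N)`, and this margin lets
`w = 𝟙` work for `t` slightly above `δ / (∑ zᵢ / nᵢ - 1 - δ)`.
-/

open Finset Filter Topology

section ConvexGeometry

variable {E : Type*} [AddCommGroup E] [Module ℝ E] [TopologicalSpace E] [IsTopologicalAddGroup E]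
  [ContinuousSMul ℝ E]

theorem exists_pos_add_smul_mem_of_mem_interior {s : Set E} {x : E} (hx : x ∈ interior s) (v : E) :
    ∃ t : ℝ, 0 < t ∧ x + t • v ∈ s := by
  have hcont : Continuous fun t : ℝ => x + t • v := by fun_prop
  have : ∀ᶠ t in 𝓝[>] (0 : ℝ), x + t • v ∈ s :=
    nhdsWithin_le_nhds (hcont.tendsto' 0 x (by simp) (mem_interior_iff_mem_nhds.1 hx))
  obtain ⟨t, hmem, ht⟩ := (this.and self_mem_nhdsWithin).exists
  exact ⟨t, ht, hmem⟩

theorem mem_interior_of_add_smul_sub_mem_interior {s : Set E} (hs : Convex ℝ s) {w z : E}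
    (hz : z ∈ s) {t : ℝ} (ht : 0 < t) (h : w + t • (w - z) ∈ interior s) : w ∈ interior s := by
  have hw : (1 / (1 + t)) • (w + t • (w - z)) + (t / (1 + t)) • z = w := by
    have : 1 + t ≠ 0 := by positivity
    match_scalars <;> field_simp
    ring
  rw [← hw]
  exact hs.combo_interior_self_mem_interior h hz (by positivity) (by positivity) (by field_simp)

end ConvexGeometry

theorem Convex.sum_smul_mem_of_zero_mem {E : Type*} [AddCommGroup E] [Module ℝ E] {s : Set E}
    (hs : Convex ℝ s) (h0 : (0 : E) ∈ s) {ι : Type*} [Fintype ι] {w : ι → ℝ} {z : ι → E}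
    (hw₀ : ∀ i, 0 ≤ w i) (hw₁ : ∑ i, w i ≤ 1) (hz : ∀ i, z i ∈ s) : ∑ i, w i • z i ∈ s := by
  have := hs.sum_mem (t := univ) (w := fun o : Option ι => o.elim (1 - ∑ i, w i) w)
    (z := fun o => o.elim 0 z) (by rintro (_ | i) _ <;> simp [hw₀, hw₁])
    (by simp [Fintype.sum_option]) (by rintro (_ | i) _ <;> simp [h0, hz])
  simpa [Fintype.sum_option] using this

section IntegerHull

variable {d : ℕ}

def integerHull (P : Set (Fin d → ℝ)) : Set (Fin d → ℝ) := convexHull ℝ (P ∩ intPts d)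

theorem integerHull_subset {P : Set (Fin d → ℝ)} (hP : Convex ℝ P) : integerHull P ⊆ P :=
  convexHull_min Set.inter_subset_left hP

theorem Hollow.mono {P Q : Set (Fin d → ℝ)} (hQ : Hollow Q) (h : P ⊆ Q) : Hollow P :=
  Set.subset_empty_iff.1 (hQ ▸ Set.inter_subset_inter_left _ (interior_mono h))

theorem finite_Icc_inter_intPts (a b : Fin d → ℝ) : (Set.Icc a b ∩ intPts d).Finite := by
  refine ((Set.finite_Icc (fun i => ⌈a i⌉) (fun i => ⌊b i⌋)).image
    fun ζ i => (ζ i : ℝ)).subset ?_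
  rintro x ⟨⟨hax, hxb⟩, hx⟩
  choose ζ hζ using hx
  refine ⟨ζ, ⟨fun i => Int.ceil_le.2 ?_, fun i => Int.le_floor.2 ?_⟩, funext fun i => (hζ i).symm⟩
  · rw [← hζ]; exact hax i
  · rw [← hζ]; exact hxb i

theorem isLatticePolytope_integerHull {P : Set (Fin d → ℝ)} (hfin : (P ∩ intPts d).Finite)
    (hne : (P ∩ intPts d).Nonempty) : IsLatticePolytope (integerHull P) :=
  ⟨P ∩ intPts d, hfin, hne, Set.inter_subset_right, rfl⟩

theorem exists_intPts_not_mem_of_integerHull_ssubset {P Q : Set (Fin d → ℝ)}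
    (hQ : IsLatticePolytope Q) (hPQ : integerHull P ⊂ Q) : ∃ z ∈ Q, z ∈ intPts d ∧ z ∉ P := by
  obtain ⟨V, -, -, hV, rfl⟩ := hQ
  by_contra! h
  exact hPQ.not_subset (convexHull_mono fun z hz =>
    ⟨h z (subset_convexHull ℝ V hz) (hV hz), hV hz⟩)

end IntegerHull

theorem convex_deltaPoly (d : ℕ) : Convex ℝ (DeltaPoly d) :=
  (convex_Ici 0).inter <| convex_halfSpace_le (f := fun x : Fin d → ℝ => ∑ i, coef d i * x i)
    ⟨fun x y => by simp [mul_add, sum_add_distrib], fun a x => by simp [mul_sum, mul_left_comm]⟩ 1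

theorem zero_mem_deltaPoly_inter_intPts (d : ℕ) : (0 : Fin d → ℝ) ∈ DeltaPoly d ∩ intPts d :=
  ⟨⟨fun _ => le_rfl, by simp⟩, fun _ => ⟨0, by simp⟩⟩

section Simplex

variable {e : ℕ}

def axisLength (e : ℕ) (i : Fin (e + 2)) : ℕ :=
  if (i : ℕ) < e then 2 ^ ((i : ℕ) + 1)
  else if (i : ℕ) = e then 2 ^ (e + 1) - 1 else 2 ^ (e + 1) + 1

noncomputable def coefDefect (e : ℕ) : ℝ :=
  2 / ((2 ^ (e + 1) - 1) * 2 ^ (e + 1) * (2 ^ (e + 1) + 1))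

theorem four_le_two_pow (he : 2 ≤ e) : (4 : ℝ) ≤ 2 ^ e := by
  calc (4 : ℝ) = 2 ^ 2 := by norm_num
    _ ≤ 2 ^ e := pow_le_pow_right₀ (by norm_num) he

theorem axisLength_cast (i : Fin (e + 2)) :
    (axisLength e i : ℝ) = if (i : ℕ) < e then 2 ^ ((i : ℕ) + 1)
      else if (i : ℕ) = e then 2 ^ (e + 1) - 1 else 2 ^ (e + 1) + 1 := by
  unfold axisLength
  split_ifs <;> push_cast [Nat.one_le_two_pow] <;> rfl

theorem axisLength_pos (i : Fin (e + 2)) : 0 < axisLength e i := by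
  unfold axisLength
  split_ifs <;> simp

theorem axisLength_le (i : Fin (e + 2)) (hi : i ≠ Fin.last (e + 1)) :
    (axisLength e i : ℝ) ≤ 2 ^ (e + 1) - 1 := by
  have hi : (i : ℕ) < e + 1 := Fin.val_lt_last hi
  rw [axisLength_cast]
  split_ifs with h
  · have : (2 : ℝ) ^ ((i : ℕ) + 1) * 2 ≤ 2 ^ (e + 1) := by
      rw [← pow_succ]; exact pow_le_pow_right₀ (by norm_num) (by omega)
    have : (1 : ℝ) ≤ 2 ^ ((i : ℕ) + 1) := one_le_pow₀ (by norm_num)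
    linarith
  · exact le_rfl
  · omega

theorem coef_eq_inv_axisLength (he : 2 ≤ e) (i : Fin (e + 2)) :
    coef (e + 2) i = 1 / axisLength e i - if i = Fin.last (e + 1) then coefDefect e else 0 := by
  have hm := four_le_two_pow he
  rw [axisLength_cast]
  simp only [coef, alphaConst, coefDefect, Nat.add_sub_cancel, Fin.ext_iff, Fin.val_last,
    show e + 2 - 1 = e + 1 by omega]
  have := i.isLt
  split_ifs <;> first | omega | rw [sub_zero] | skip
  rw [pow_succ]
  generalize (2 : ℝ) ^ e = m at *
  have : m - 1 ≠ 0 := by linarith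
  rw [show m * 2 + 1 + 1 / (m - 1) = m * (2 * m - 1) / (m - 1) by field_simp; ring]
  have : 2 * m - 1 ≠ 0 := by linarith
  have : m * 2 - 1 ≠ 0 := by linarith
  have : m * 2 + 1 ≠ 0 := by linarith
  field_simp
  ring

theorem coefDefect_pos (he : 2 ≤ e) : 0 < coefDefect e := by
  have : (4 : ℝ) ≤ 2 ^ e := four_le_two_pow he
  unfold coefDefect
  rw [pow_succ]
  apply div_pos two_pos
  apply mul_pos (mul_pos _ _) _ <;> linarith

theorem succ_mul_coefDefect :
    (2 ^ (e + 1) + 1) * coefDefect e = 2 / ((2 ^ (e + 1) - 1) * 2 ^ (e + 1)) := by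
  have : (2 : ℝ) ^ (e + 1) + 1 ≠ 0 := by positivity
  unfold coefDefect
  field_simp

theorem coefDefect_mul_axisLength_lt_one (he : 2 ≤ e) (i : Fin (e + 2)) :
    coefDefect e * axisLength e i < 1 := by
  have hm : (4 : ℝ) ≤ 2 ^ e := four_le_two_pow he
  have hn : (axisLength e i : ℝ) ≤ 2 ^ (e + 1) + 1 := by
    rw [axisLength_cast]
    split_ifs
    · have : (2 : ℝ) ^ ((i : ℕ) + 1) ≤ 2 ^ (e + 1) := pow_le_pow_right₀ (by norm_num) (by omega)
      linarith
    all_goals linarith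
  calc coefDefect e * axisLength e i ≤ coefDefect e * (2 ^ (e + 1) + 1) :=
        mul_le_mul_of_nonneg_left hn (coefDefect_pos he).le
    _ < 1 := by
      unfold coefDefect
      rw [pow_succ]
      generalize (2 : ℝ) ^ e = m at *
      have h1 : 0 < m * 2 - 1 := by linarith
      have h2 : 0 < m * 2 + 1 := by linarith
      rw [div_mul_eq_mul_div, div_lt_one (by positivity)]
      nlinarith [mul_pos h1 h2]

theorem sum_one_div_two_pow (n : ℕ) : ∑ i : Fin n, 1 / (2 : ℝ) ^ ((i : ℕ) + 1) = 1 - 1 / 2 ^ n := by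
  induction n with
  | zero => simp
  | succ n ih =>
    rw [Fin.sum_univ_castSucc]
    simp only [Fin.val_castSucc, Fin.val_last, ih]
    field_simp
    ring

noncomputable def axisForm (e : ℕ) : (Fin (e + 2) → ℝ) →L[ℝ] ℝ :=
  ∑ i, (axisLength e i : ℝ)⁻¹ • ContinuousLinearMap.proj i

theorem axisForm_apply (x : Fin (e + 2) → ℝ) : axisForm e x = ∑ i, x i / axisLength e i := by
  simp [axisForm, div_eq_inv_mul]

theorem axisForm_one (he : 2 ≤ e) : axisForm e 1 = 1 + coefDefect e := by
  have hm : (4 : ℝ) ≤ 2 ^ e := four_le_two_pow he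
  simp only [axisForm_apply, Pi.one_apply, Fin.sum_univ_castSucc, axisLength_cast,
    Fin.val_castSucc, Fin.val_last, Fin.is_lt, if_true, lt_irrefl, if_false, sum_one_div_two_pow,
    show ¬e + 1 < e by omega, show e + 1 ≠ e by omega]
  unfold coefDefect
  rw [pow_succ]
  have : (2 : ℝ) ^ e * 2 - 1 ≠ 0 := by linarith
  have : (2 : ℝ) ^ e * 2 + 1 ≠ 0 := by linarith
  field_simp
  ring

theorem axisForm_eq (he : 2 ≤ e) (x : Fin (e + 2) → ℝ) :
    axisForm e x = ∑ i, coef (e + 2) i * x i + coefDefect e * x (Fin.last (e + 1)) := by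
  simp only [axisForm_apply, coef_eq_inv_axisLength he, sub_mul, ite_mul, zero_mul,
    sum_sub_distrib, sum_ite_eq', mem_univ, if_true, one_div_mul_eq_div]
  ring

theorem sum_coef_s19 (he : 2 ≤ e) : ∑ i, coef (e + 2) i = 1 := by
  simpa [axisForm_one he, eq_comm] using axisForm_eq he 1

theorem coef_pos (he : 2 ≤ e) (i : Fin (e + 2)) : 0 < coef (e + 2) i := by
  have hn : (0 : ℝ) < axisLength e i := by exact_mod_cast axisLength_pos i
  have hδ := coefDefect_mul_axisLength_lt_one he i
  rw [coef_eq_inv_axisLength he, lt_sub_iff_add_lt, zero_add, lt_div_iff₀ hn]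
  split_ifs
  · exact hδ
  · simp

theorem one_div_le_coef (he : 2 ≤ e) (i : Fin (e + 2)) (hi : i ≠ Fin.last (e + 1)) :
    1 / (2 ^ (e + 1) - 1) ≤ coef (e + 2) i := by
  have hn : (0 : ℝ) < axisLength e i := by exact_mod_cast axisLength_pos i
  rw [coef_eq_inv_axisLength he, if_neg hi, sub_zero]
  exact one_div_le_one_div_of_le hn (axisLength_le i hi)

def scaledCoef (e : ℕ) (i : Fin (e + 2)) : ℤ :=
  if (i : ℕ) < e then 2 ^ (e - i) * (2 ^ (e + 1) - 1) else if (i : ℕ) = e then 2 ^ (e + 1)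
  else 2 ^ (e + 1) - 2

theorem scaledCoef_cast (he : 2 ≤ e) (i : Fin (e + 2)) :
    (scaledCoef e i : ℝ) = (2 ^ (e + 1) - 1) * 2 ^ (e + 1) * coef (e + 2) i := by
  have hm : (4 : ℝ) ≤ 2 ^ e := four_le_two_pow he
  rw [coef_eq_inv_axisLength he, axisLength_cast, scaledCoef, coefDefect]
  have := i.isLt
  simp only [Fin.ext_iff, Fin.val_last]
  split_ifs <;> try omega
  · have : (2 : ℝ) ^ (e + 1) = 2 ^ (e - i) * 2 ^ ((i : ℕ) + 1) := by
      rw [← pow_add]; congr 1; omega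
    push_cast
    rw [this]
    field_simp
    ring
  · push_cast
    have : (2 : ℝ) ^ (e + 1) - 1 ≠ 0 := by rw [pow_succ]; linarith
    field_simp
    ring
  · push_cast
    rw [pow_succ]
    have : (2 : ℝ) ^ e * 2 - 1 ≠ 0 := by linarith
    have : (2 : ℝ) ^ e * 2 + 1 ≠ 0 := by linarith
    field_simp
    ring

theorem even_scaledCoef (i : Fin (e + 2)) : Even (scaledCoef e i) := by
  unfold scaledCoef
  split_ifs with h
  · exact (Int.even_pow.2 ⟨even_two, by omega⟩).mul_right _
  · exact Int.even_pow.2 ⟨even_two, by omega⟩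
  · exact (Int.even_pow.2 ⟨even_two, by omega⟩).sub even_two

theorem one_add_le_sum_coef_mul (he : 2 ≤ e) {z : Fin (e + 2) → ℝ} (hz : z ∈ intPts (e + 2))
    (h : 1 < ∑ i, coef (e + 2) i * z i) :
    1 + (2 ^ (e + 1) + 1) * coefDefect e ≤ ∑ i, coef (e + 2) i * z i := by
  choose ζ hζ using hz
  set M : ℤ := (2 ^ (e + 1) - 1) * 2 ^ (e + 1)
  have hM : (0 : ℝ) < M := by
    have : (1 : ℝ) < 2 ^ (e + 1) := one_lt_pow₀ (by norm_num) (by omega)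
    push_cast [M]; positivity
  have hsum : (M : ℝ) * ∑ i, coef (e + 2) i * z i = ((∑ i, scaledCoef e i * ζ i : ℤ) : ℝ) := by
    push_cast [M, mul_sum, scaledCoef_cast he, hζ]
    exact sum_congr rfl fun i _ => by ring
  have hlt : M < ∑ i, scaledCoef e i * ζ i := by
    rw [← Int.cast_lt (R := ℝ), ← hsum]
    nlinarith
  have hevenM : Even M := (Int.even_pow.2 ⟨even_two, by omega⟩).mul_left _
  have heven : Even (∑ i, scaledCoef e i * ζ i) :=
    even_sum _ fun i _ => (even_scaledCoef i).mul_right _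
  have hle : M + 2 ≤ ∑ i, scaledCoef e i * ζ i := by
    obtain ⟨a, ha⟩ := hevenM
    obtain ⟨b, hb⟩ := heven
    omega
  have hleR : (M : ℝ) + 2 ≤ M * ∑ i, coef (e + 2) i * z i := by
    rw [hsum]; exact_mod_cast hle
  have hδ : (2 ^ (e + 1) + 1) * coefDefect e = 2 / M := by
    push_cast [M]; exact succ_mul_coefDefect
  rw [hδ, add_div' _ _ _ hM.ne', div_le_iff₀ hM]
  linarith

theorem apply_le_inv_coef (he : 2 ≤ e) {x : Fin (e + 2) → ℝ} (hx : x ∈ DeltaPoly (e + 2))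
    (j : Fin (e + 2)) : x j ≤ (coef (e + 2) j)⁻¹ := by
  rw [← one_div, le_div_iff₀' (coef_pos he j)]
  exact (single_le_sum (fun i _ => mul_nonneg (coef_pos he i).le (hx.1 i)) (mem_univ j)).trans hx.2

theorem finite_deltaPoly_inter_intPts (he : 2 ≤ e) : (DeltaPoly (e + 2) ∩ intPts (e + 2)).Finite :=
  (finite_Icc_inter_intPts 0 fun j => (coef (e + 2) j)⁻¹).subset
    (Set.inter_subset_inter_left _ fun _ hx => ⟨hx.1, apply_le_inv_coef he hx⟩)

theorem hollow_deltaPoly (he : 2 ≤ e) : Hollow (DeltaPoly (e + 2)) := by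
  refine Set.eq_empty_of_forall_notMem fun x ⟨hint, hx⟩ => ?_
  obtain ⟨s, hs, hxs⟩ := exists_pos_add_smul_mem_of_mem_interior hint (-1)
  obtain ⟨t, ht, hxt⟩ := exists_pos_add_smul_mem_of_mem_interior hint 1
  have hone : ∀ i, 1 ≤ x i := fun i => by
    obtain ⟨a, ha⟩ := hx i
    have : s ≤ x i := by simpa using hxs.1 i
    rw [ha] at this ⊢
    exact_mod_cast (show (0 : ℤ) < a by exact_mod_cast hs.trans_le this)
  have hle : ∑ i, coef (e + 2) i * x i + t ≤ 1 := by
    simpa [mul_add, sum_add_distrib, ← sum_mul, sum_coef_s19 he] using hxt.2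
  have hge : 1 ≤ ∑ i, coef (e + 2) i * x i :=
    (sum_coef_s19 he).symm.le.trans
      (sum_le_sum fun i _ => le_mul_of_one_le_right (coef_pos he i).le (hone i))
  linarith

def openAxisSimplex (e : ℕ) : Set (Fin (e + 2) → ℝ) := {x | (∀ i, 0 < x i) ∧ axisForm e x < 1}

theorem isOpen_openAxisSimplex : IsOpen (openAxisSimplex e) := by
  simp only [openAxisSimplex, Set.ofPred_and, Set.ofPred_forall]
  exact
  (isOpen_iInter_of_finite fun i => isOpen_lt continuous_const (continuous_apply i)).inter
    (isOpen_lt (axisForm e).continuous continuous_const)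

theorem single_axisLength_mem (he : 2 ≤ e) (i : Fin (e + 2)) :
    Pi.single i (axisLength e i : ℝ) ∈ DeltaPoly (e + 2) ∩ intPts (e + 2) := by
  refine ⟨⟨fun j => ?_, ?_⟩, fun j => ?_⟩
  · rw [Pi.single_apply]; split_ifs <;> positivity
  · have hn : (0 : ℝ) < axisLength e i := by exact_mod_cast axisLength_pos i
    simp only [Pi.single_apply, mul_ite, mul_zero, sum_ite_eq', mem_univ, if_true]
    rw [coef_eq_inv_axisLength he, sub_mul, one_div_mul_cancel hn.ne']
    split_ifs <;> nlinarith [coefDefect_pos he]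
  · rw [Pi.single_apply]; split_ifs
    · exact ⟨axisLength e i, by simp⟩
    · exact ⟨0, by simp⟩

theorem openAxisSimplex_subset_interior_integerHull (he : 2 ≤ e) :
    openAxisSimplex e ⊆ interior (integerHull (DeltaPoly (e + 2))) := by
  refine interior_maximal (fun x hx => ?_) isOpen_openAxisSimplex
  have hn : ∀ i, (0 : ℝ) < axisLength e i := fun i => by exact_mod_cast axisLength_pos i
  have hx' : ∑ i, (x i / axisLength e i) • Pi.single i (axisLength e i : ℝ) = x := by
    ext j
    simp [Finset.sum_apply, Pi.single_apply, (hn j).ne']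
  rw [← hx']
  refine (convex_convexHull ℝ _).sum_smul_mem_of_zero_mem
    (subset_convexHull ℝ _ (zero_mem_deltaPoly_inter_intPts _))
    (fun i => div_nonneg (hx.1 i).le (hn i).le) ?_
    fun i => subset_convexHull ℝ _ (single_axisLength_mem he i)
  rw [← axisForm_apply]
  exact hx.2.le

theorem isFullDim_integerHull (he : 2 ≤ e) : IsFullDim (integerHull (DeltaPoly (e + 2))) := by
  rw [IsFullDim, integerHull, ← (convex_convexHull ℝ _).interior_nonempty_iff_affineSpan_eq_top]
  refine ⟨(1 / 2 : ℝ) • 1, openAxisSimplex_subset_interior_integerHull he ⟨fun i => by simp, ?_⟩⟩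
  have hδ : coefDefect e * axisLength e 0 < 1 := coefDefect_mul_axisLength_lt_one he 0
  have hn0 : (1 : ℝ) ≤ axisLength e 0 := by exact_mod_cast axisLength_pos 0
  rw [map_smul, axisForm_one he, smul_eq_mul]
  nlinarith [coefDefect_pos he]

theorem inv_coef_last :
    (coef (e + 2) (Fin.last (e + 1)))⁻¹ = 2 ^ (e + 1) + 1 + alphaConst (e + 2) := by
  simp [coef]

theorem alphaConst_mem_Ioo (he : 2 ≤ e) : alphaConst (e + 2) ∈ Set.Ioo 0 1 := by
  have hm : (4 : ℝ) ≤ 2 ^ e := four_le_two_pow he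
  rw [alphaConst, Nat.add_sub_cancel]
  exact ⟨div_pos one_pos (by linarith), (div_lt_one (by linarith)).2 (by linarith)⟩

theorem apply_last_le (he : 2 ≤ e) {x : Fin (e + 2) → ℝ}
    (hx : x ∈ DeltaPoly (e + 2) ∩ intPts (e + 2)) : x (Fin.last (e + 1)) ≤ 2 ^ (e + 1) + 1 := by
  obtain ⟨a, ha⟩ := hx.2 (Fin.last (e + 1))
  have h := apply_le_inv_coef he hx.1 (Fin.last (e + 1))
  rw [inv_coef_last, ha] at h
  have : a < 2 ^ (e + 1) + 2 := by
    rw [← Int.cast_lt (R := ℝ)]; push_cast; linarith [(alphaConst_mem_Ioo he).2]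
  rw [ha]
  exact_mod_cast (show a ≤ 2 ^ (e + 1) + 1 by omega)

theorem integerHull_ssubset_deltaPoly (he : 2 ≤ e) :
    integerHull (DeltaPoly (e + 2)) ⊂ DeltaPoly (e + 2) := by
  have hhull : integerHull (DeltaPoly (e + 2)) ⊆ {x | x (Fin.last (e + 1)) ≤ 2 ^ (e + 1) + 1} :=
    convexHull_min (fun _ hx => apply_last_le he hx)
      ((convex_Iic _).linear_preimage (LinearMap.proj (R := ℝ) (φ := fun _ => ℝ) _))
  have hc := coef_pos he (Fin.last (e + 1))
  refine (Set.ssubset_iff_of_subset (integerHull_subset (convex_deltaPoly _))).2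
    ⟨Pi.single (Fin.last (e + 1)) (coef (e + 2) (Fin.last (e + 1)))⁻¹, ⟨fun i => ?_, ?_⟩,
      fun h => ?_⟩
  · rw [Pi.single_apply]
    split_ifs
    · exact inv_nonneg.2 hc.le
    · exact le_rfl
  · simp [Pi.single_apply, mul_inv_cancel₀ hc.ne']
  · have := hhull h
    simp only [Set.mem_ofPred_eq, Pi.single_eq_same, inv_coef_last] at this
    linarith [(alphaConst_mem_Ioo he).1]

theorem exists_add_smul_sub_mem_openAxisSimplex_of_neg (he : 2 ≤ e) {z : Fin (e + 2) → ℝ}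
    {j : Fin (e + 2)} (hj : z j < 0) :
    ∃ w ∈ intPts (e + 2), ∃ t : ℝ, 0 < t ∧ w + t • (w - z) ∈ openAxisSimplex e := by
  set w : Fin (e + 2) → ℝ := 1 - Pi.single j 1
  have hwZ : w ∈ intPts (e + 2) := fun i => by
    by_cases h : i = j
    · exact ⟨0, by simp [w, h]⟩
    · exact ⟨1, by simp [w, h]⟩
  have hw : axisForm e w < 1 := by
    have hn : (0 : ℝ) < axisLength e j := by exact_mod_cast axisLength_pos j
    have hδ := coefDefect_mul_axisLength_lt_one he j
    have hsingle : axisForm e (Pi.single j 1) = 1 / axisLength e j := by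
      simp [axisForm_apply, Pi.single_apply, ite_div]
    have : coefDefect e < 1 / axisLength e j := by rwa [lt_div_iff₀ hn]
    rw [map_sub, axisForm_one he, hsingle]
    linarith
  have hnear : ∀ᶠ t in 𝓝 (0 : ℝ),
      (∀ i, i ≠ j → 0 < (w + t • (w - z)) i) ∧ axisForm e (w + t • (w - z)) < 1 := by
    refine (eventually_all.2 fun i => ?_).and ?_
    · by_cases h : i = j
      · exact Eventually.of_forall fun _ hi => absurd h hi
      · refine (ContinuousAt.eventually_lt (f := fun _ => (0 : ℝ)) continuousAt_const
          (by fun_prop) (by simp [w, h])).mono fun t ht _ => ht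
    · exact ContinuousAt.eventually_lt (by fun_prop) continuousAt_const (by simpa using hw)
  obtain ⟨t, ⟨hpos, hlt⟩, ht : 0 < t⟩ :=
    ((hnear.filter_mono nhdsWithin_le_nhds).and (self_mem_nhdsWithin (s := Set.Ioi 0))).exists
  refine ⟨w, hwZ, t, ht, fun i => ?_, hlt⟩
  by_cases h : i = j
  · subst h
    simpa [w] using mul_pos ht (neg_pos.2 hj)
  · exact hpos i h

-- With `R = axisForm e z - (1 + δ)` this says `0 < 1 + (δ / R) * (1 - z k)`: at `t = δ / R` the
-- point `1 + t • (1 - z)` still has positive coordinates.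
theorem coefDefect_mul_apply_lt (he : 2 ≤ e) {z : Fin (e + 2) → ℝ} (hz : z ∈ intPts (e + 2))
    (hz₀ : ∀ i, 0 ≤ z i) (h : 1 < ∑ i, coef (e + 2) i * z i) (k : Fin (e + 2)) :
    coefDefect e * z k < ∑ i, coef (e + 2) i * z i - 1 + coefDefect e * z (Fin.last (e + 1)) := by
  by_cases hk : k = Fin.last (e + 1)
  · rw [hk]; linarith
  have hδ := coefDefect_pos he
  have hzL := mul_nonneg hδ.le (hz₀ (Fin.last (e + 1)))
  have hgap := one_add_le_sum_coef_mul he hz h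
  have hN : (8 : ℝ) ≤ 2 ^ (e + 1) := by
    rw [pow_succ]; linarith [four_le_two_pow he]
  obtain ⟨a, ha⟩ := hz k
  rcases le_or_gt a (2 ^ (e + 1)) with hsmall | hbig
  · have : z k ≤ 2 ^ (e + 1) := by rw [ha]; exact_mod_cast hsmall
    nlinarith [mul_le_mul_of_nonneg_left this hδ.le]
  have hbig : 2 ^ (e + 1) + 1 ≤ z k := by
    rw [ha]; exact_mod_cast (show 2 ^ (e + 1) + 1 ≤ a by omega)
  have hsingle : coef (e + 2) k * z k ≤ ∑ i, coef (e + 2) i * z i :=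
    single_le_sum (fun i _ => mul_nonneg (coef_pos he i).le (hz₀ i)) (mem_univ k)
  have hmargin : 1 < (1 / (2 ^ (e + 1) - 1) - coefDefect e) * (2 ^ (e + 1) + 1) := by
    rw [sub_mul, mul_comm (coefDefect e), succ_mul_coefDefect]
    generalize (2 : ℝ) ^ (e + 1) = N at hN ⊢
    have : N - 1 ≠ 0 := by linarith
    have : N ≠ 0 := by linarith
    rw [show 1 / (N - 1) * (N + 1) - 2 / ((N - 1) * N) = (N + 2) / N by
      field_simp; ring, lt_div_iff₀ (by linarith)]
    linarith
  have hcoef := one_div_le_coef he k hk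
  have : 1 < (coef (e + 2) k - coefDefect e) * z k :=
    hmargin.trans_le (mul_le_mul (by linarith) hbig (by positivity) (by nlinarith))
  nlinarith

theorem exists_add_smul_sub_mem_openAxisSimplex_of_one_lt (he : 2 ≤ e) {z : Fin (e + 2) → ℝ}
    (hz : z ∈ intPts (e + 2)) (hz₀ : ∀ i, 0 ≤ z i) (h : 1 < ∑ i, coef (e + 2) i * z i) :
    ∃ w ∈ intPts (e + 2), ∃ t : ℝ, 0 < t ∧ w + t • (w - z) ∈ openAxisSimplex e := by
  set R := axisForm e z - (1 + coefDefect e)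
  have hδ := coefDefect_pos he
  have hR' : R = ∑ i, coef (e + 2) i * z i - 1 + coefDefect e * z (Fin.last (e + 1))
      - coefDefect e := by
    simp only [R, axisForm_eq he]; ring
  have hR : 0 < R := by
    have := one_add_le_sum_coef_mul he hz h
    have := mul_nonneg hδ.le (hz₀ (Fin.last (e + 1)))
    have : (0 : ℝ) < 2 ^ (e + 1) := by positivity
    rw [hR']
    nlinarith
  have hform : ∀ t : ℝ, axisForm e (1 + t • (1 - z)) = 1 + coefDefect e - t * R := by
    intro t
    simp only [R, map_add, map_smul, map_sub, axisForm_one he, smul_eq_mul]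
    ring
  set t₀ := coefDefect e / R
  have hnear : ∀ᶠ t in 𝓝 t₀, ∀ i, 0 < (1 + t • (1 - z)) i := by
    refine eventually_all.2 fun i => ContinuousAt.eventually_lt (f := fun _ => (0 : ℝ))
      continuousAt_const (by fun_prop) ?_
    have := coefDefect_mul_apply_lt he hz hz₀ h i
    simp only [Pi.add_apply, Pi.one_apply, Pi.smul_apply, Pi.sub_apply, smul_eq_mul, t₀]
    rw [div_mul_eq_mul_div, add_div' _ _ _ hR.ne']
    exact div_pos (by rw [hR']; linarith) hR
  obtain ⟨t, hpos, ht : t₀ < t⟩ :=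
    ((hnear.filter_mono nhdsWithin_le_nhds).and (self_mem_nhdsWithin (s := Set.Ioi t₀))).exists
  refine ⟨1, fun i => ⟨1, by simp⟩, t, (div_pos hδ hR).trans ht, hpos, ?_⟩
  rw [hform]
  have : coefDefect e < t * R := by rwa [div_lt_iff₀ hR] at ht
  linarith

theorem exists_add_smul_sub_mem_openAxisSimplex (he : 2 ≤ e) {z : Fin (e + 2) → ℝ}
    (hz : z ∈ intPts (e + 2)) (hzΔ : z ∉ DeltaPoly (e + 2)) :
    ∃ w ∈ intPts (e + 2), ∃ t : ℝ, 0 < t ∧ w + t • (w - z) ∈ openAxisSimplex e := by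
  by_cases hneg : ∃ j, z j < 0
  · obtain ⟨j, hj⟩ := hneg
    exact exists_add_smul_sub_mem_openAxisSimplex_of_neg he hj
  · simp only [not_exists, not_lt] at hneg
    exact exists_add_smul_sub_mem_openAxisSimplex_of_one_lt he hz hneg
      (not_le.1 fun hle => hzΔ ⟨hneg, hle⟩)

theorem interior_inter_intPts_nonempty_of_integerHull_ssubset (he : 2 ≤ e)
    {Q : Set (Fin (e + 2) → ℝ)} (hQ : IsLatticePolytope Q)
    (hQ' : integerHull (DeltaPoly (e + 2)) ⊂ Q) :
    (interior Q ∩ intPts (e + 2)).Nonempty := by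
  obtain ⟨z, hzQ, hz, hzΔ⟩ := exists_intPts_not_mem_of_integerHull_ssubset hQ hQ'
  obtain ⟨w, hw, t, ht, hwt⟩ := exists_add_smul_sub_mem_openAxisSimplex he hz hzΔ
  have hQconv : Convex ℝ Q := by
    obtain ⟨V, -, -, -, rfl⟩ := hQ
    exact convex_convexHull ℝ V
  exact ⟨w, mem_interior_of_add_smul_sub_mem_interior hQconv hzQ ht
    (interior_mono hQ'.subset (openAxisSimplex_subset_interior_integerHull he hwt)), hw⟩

end Simplex

/-- For `d ≥ 4`, the integer hull `Δ(d)_I` of `Δ(d)` is a full-dimensional hollow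
lattice polytope, properly contained in `Δ(d)`, and maximal among hollow lattice
`d`-polytopes. -/
theorem integer_hull_maximal (d : ℕ) (hd : 4 ≤ d) :
    IsLatticePolytope (convexHull ℝ (DeltaPoly d ∩ intPts d)) ∧
    IsFullDim (convexHull ℝ (DeltaPoly d ∩ intPts d)) ∧
    Hollow (convexHull ℝ (DeltaPoly d ∩ intPts d)) ∧
    convexHull ℝ (DeltaPoly d ∩ intPts d) ⊂ DeltaPoly d ∧
    ∀ Q : Set (Fin d → ℝ), IsLatticePolytope Q → IsFullDim Q →
      convexHull ℝ (DeltaPoly d ∩ intPts d) ⊂ Q → (interior Q ∩ intPts d).Nonempty := by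
  obtain ⟨e, rfl⟩ : ∃ e, d = e + 2 := ⟨d - 2, by omega⟩
  have he : 2 ≤ e := by omega
  exact ⟨isLatticePolytope_integerHull (finite_deltaPoly_inter_intPts he)
      ⟨0, zero_mem_deltaPoly_inter_intPts _⟩,
    isFullDim_integerHull he,
    (hollow_deltaPoly he).mono (integerHull_subset (convex_deltaPoly _)),
    integerHull_ssubset_deltaPoly he,
    fun _ hQ _ hQ' => interior_inter_intPts_nonempty_of_integerHull_ssubset he hQ hQ'⟩
end
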